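/- Let (X_poi, X_dir) be an irredundant solution of the polyhedral projection problem computing the upper image 𝒫 of a feasible VLP with L ∩ C = {0}. Then for every (x,y) ∈ X_dir with y ∉ L + C\{0}, the direction x is a minimizer of the VLP, i.e., y ∉ 0⁺𝒫 + C\{0}; consequently S_poi = {x : (x,y) ∈ X_poi} together with S_dir = {x : (x,y) ∈ X_dir, y ∉ L + C\{0}} forms a solution of the VLP. -/

import Mathlib

/-!
Write `K` for the cone generated by the image vectors `Y_dir` of the directions in `Xdir`, and
`Y_poi` for those of the points. The upper image is `conv Y_poi + K`, and a finitely generated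
cone is closed (conic Carathéodory), so its recession cone is `K` and `L = K ∩ -K`; in particular
`C ⊆ K`. Irredundance says that no `y ∈ Y_dir` lies in the cone of the others and no
`y ∈ Y_poi` lies in `conv (Y_poi \ {y}) + K`.

Let `y ∈ Y_dir` with `y = d + c`, `d ∈ K`, `c ∈ C \ {0}`. Splitting `d = λ y + d'` and
`c = μ y + c'` with `d', c'` in the cone of the other generators gives
`(1 - λ - μ) y = d' + c'`. If `λ + μ < 1`, `y` is redundant. If `λ + μ > 1`, then `-y ∈ K`, so
`d ∈ L` and `y ∈ L + C \ {0}`. If `λ + μ = 1`, then `c' = -d' ∈ L`; as `L ∩ C = {0}`, `μ > 0`,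
and `y = μ⁻¹ (-c') + μ⁻¹ c ∈ L + C \ {0}`. Points are handled by the same splitting inside
`conv Y_poi`. For the infimizer, the dropped generators lie in `L + C`, while `L` is generated by
the generators lying in `L`, none of which is dropped.
-/

open Pointwise Set

/-- `cone B = {λ x : λ ≥ 0, x ∈ conv B}`, with `cone ∅ = {0}`. -/
def coneOf {q : ℕ} (B : Set (Fin q → ℝ)) : Set (Fin q → ℝ) :=
  insert 0 {x | ∃ l : ℝ, 0 ≤ l ∧ ∃ b ∈ convexHull ℝ B, x = l • b}

/-- recession cone `0⁺P = {d : P + d ⊆ P}` -/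
def recCone {q : ℕ} (P : Set (Fin q → ℝ)) : Set (Fin q → ℝ) :=
  {d | ∀ y ∈ P, y + d ∈ P}

/-- `(Xpoi, Xdir)` is a solution of the polyhedral projection problem associated
to the VLP `min Px s.t. Ax ≥ b` with ordering cone `{y : Zᵀy ≥ 0}`, computing
the upper image `UI`. -/
def IsPPSolution {m n q r : ℕ} (A : Matrix (Fin m) (Fin n) ℝ) (b : Fin m → ℝ)
    (P : Matrix (Fin q) (Fin n) ℝ) (Z : Matrix (Fin q) (Fin r) ℝ)
    (UI : Set (Fin q → ℝ))
    (Xpoi Xdir : Set ((Fin n → ℝ) × (Fin q → ℝ))) : Prop :=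
  Xpoi.Finite ∧ Xdir.Finite ∧ Xpoi.Nonempty ∧
  (∀ s ∈ Xpoi, (∀ i, b i ≤ A.mulVec s.1 i) ∧
    (∀ j, Z.transpose.mulVec (P.mulVec s.1) j ≤ Z.transpose.mulVec s.2 j)) ∧
  (∀ s ∈ Xdir, s ≠ 0 ∧ (∀ i, (0:ℝ) ≤ A.mulVec s.1 i) ∧
    (∀ j, Z.transpose.mulVec (P.mulVec s.1) j ≤ Z.transpose.mulVec s.2 j)) ∧
  UI = convexHull ℝ (Prod.snd '' Xpoi) + coneOf (Prod.snd '' Xdir)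

/-- An irredundant solution: no proper sub-pair is also a solution. -/
def IsIrredundantPPSolution {m n q r : ℕ} (A : Matrix (Fin m) (Fin n) ℝ)
    (b : Fin m → ℝ) (P : Matrix (Fin q) (Fin n) ℝ) (Z : Matrix (Fin q) (Fin r) ℝ)
    (UI : Set (Fin q → ℝ))
    (Xpoi Xdir : Set ((Fin n → ℝ) × (Fin q → ℝ))) : Prop :=
  IsPPSolution A b P Z UI Xpoi Xdir ∧
  ∀ Vpoi Vdir, Vpoi ⊆ Xpoi → Vdir ⊆ Xdir →
    IsPPSolution A b P Z UI Vpoi Vdir → Vpoi = Xpoi ∧ Vdir = Xdir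
/-- `(Spoi, Sdir)` is a solution of the VLP `min Px s.t. Ax ≥ b` w.r.t. the
ordering cone `C`: a finite infimizer consisting only of minimizers. -/
def IsVLPSolution {m n q : ℕ} (A : Matrix (Fin m) (Fin n) ℝ) (b : Fin m → ℝ)
    (P : Matrix (Fin q) (Fin n) ℝ) (C : Set (Fin q → ℝ))
    (Spoi Sdir : Set (Fin n → ℝ)) : Prop :=
  Spoi.Finite ∧ Sdir.Finite ∧ Spoi.Nonempty ∧
  -- feasibility
  (∀ x ∈ Spoi, ∀ i, b i ≤ A.mulVec x i) ∧
  (∀ x ∈ Sdir, x ≠ 0 ∧ ∀ i, (0:ℝ) ≤ A.mulVec x i) ∧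
  -- minimizers
  (∀ x ∈ Spoi,
    P.mulVec x ∉ (P.mulVec '' {z | ∀ i, b i ≤ A.mulVec z i}) + (C \ {0})) ∧
  (∀ x ∈ Sdir,
    P.mulVec x ∉ (P.mulVec '' {z | ∀ i, (0:ℝ) ≤ A.mulVec z i}) + (C \ {0})) ∧
  -- finite infimizer
  convexHull ℝ (P.mulVec '' Spoi) + coneOf (P.mulVec '' Sdir) + C =
    (P.mulVec '' {z | ∀ i, b i ≤ A.mulVec z i}) + C

namespace PointedCone

section Algebra

variable {𝕜 E : Type*} [Field 𝕜] [LinearOrder 𝕜] [IsStrictOrderedRing 𝕜] [AddCommGroup E]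
  [Module 𝕜 E]

lemma mem_hull_finset_iff {s : Finset E} {x : E} :
    x ∈ hull 𝕜 (s : Set E) ↔ ∃ w : E → 𝕜, (∀ i ∈ s, 0 ≤ w i) ∧ ∑ i ∈ s, w i • i = x := by
  constructor
  · intro hx
    obtain ⟨f, -, rfl⟩ := Submodule.mem_span_finset.mp hx
    exact ⟨fun i => f i, fun i _ => (f i).2, rfl⟩
  · rintro ⟨w, hw, rfl⟩
    exact Submodule.sum_mem _ fun i hi => smul_mem _ (hw i hi) (subset_hull hi)

lemma exists_mem_hull_erase_of_not_linearIndepOn [DecidableEq E] {t : Finset E} {x : E}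
    (hdep : ¬LinearIndepOn 𝕜 id (t : Set E)) (hx : x ∈ hull 𝕜 (t : Set E)) :
    ∃ j ∈ t, x ∈ hull 𝕜 (t.erase j : Set E) := by
  obtain ⟨w, hw, rfl⟩ := mem_hull_finset_iff.mp hx
  obtain ⟨g, hg, hpos⟩ : ∃ g : E → 𝕜, ∑ i ∈ t, g i • i = 0 ∧ ∃ i ∈ t, 0 < g i := by
    obtain ⟨g, hg, i, hi, hgi⟩ := not_linearIndepOn_finset_iff.mp hdep
    rcases hgi.lt_or_gt with hneg | hpos
    · exact ⟨-g, by simpa [neg_smul] using hg, i, hi, neg_pos.mpr hneg⟩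
    · exact ⟨g, hg, i, hi, hpos⟩
  -- subtract the largest multiple of the relation `g` that keeps all weights nonnegative
  obtain ⟨j, hj, hmin⟩ := {i ∈ t | 0 < g i}.exists_min_image (fun i => w i / g i)
    (by simpa [Finset.Nonempty] using hpos)
  rw [Finset.mem_filter] at hj
  set r := w j / g j
  have hr : 0 ≤ r := div_nonneg (hw j hj.1) hj.2.le
  refine ⟨j, hj.1, mem_hull_finset_iff.mpr ⟨fun i => w i - r * g i, fun i hi => ?_, ?_⟩⟩
  · have hit := Finset.mem_of_mem_erase hi
    rcases le_or_gt (g i) 0 with hgi | hgi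
    · nlinarith [hw i hit]
    · have := hmin i (Finset.mem_filter.mpr ⟨hit, hgi⟩)
      rw [le_div_iff₀ hgi] at this
      linarith
  · rw [Finset.sum_erase _ (by simp [r, div_mul_cancel₀ _ hj.2.ne'])]
    simp only [sub_smul, Finset.sum_sub_distrib, mul_smul, ← Finset.smul_sum, hg, smul_zero,
      sub_zero]

lemma exists_linearIndepOn_of_mem_hull [DecidableEq E] (t : Finset E) {x : E}
    (hx : x ∈ hull 𝕜 (t : Set E)) :
    ∃ u ⊆ t, LinearIndepOn 𝕜 id (u : Set E) ∧ x ∈ hull 𝕜 (u : Set E) := by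
  induction t using Finset.strongInduction with
  | H t ih =>
    by_cases hli : LinearIndepOn 𝕜 id (t : Set E)
    · exact ⟨t, subset_rfl, hli, hx⟩
    · obtain ⟨j, hj, hxj⟩ := exists_mem_hull_erase_of_not_linearIndepOn hli hx
      obtain ⟨u, hu, hli, hxu⟩ := ih _ (Finset.erase_ssubset hj) hxj
      exact ⟨u, hu.trans (Finset.erase_subset _ _), hli, hxu⟩

variable {D : Set E} {Q : Set E} {K C : PointedCone 𝕜 E}

lemma exists_eq_smul_add_of_mem_hull {x : E} (y : E) (hx : x ∈ hull 𝕜 D) :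
    ∃ a : 𝕜, 0 ≤ a ∧ ∃ z ∈ hull 𝕜 (D \ {y}), x = a • y + z := by
  have hx' : x ∈ hull 𝕜 (insert y (D \ {y})) :=
    Submodule.span_mono ((subset_insert y D).trans insert_sdiff_singleton.superset) hx
  obtain ⟨a, z, hz, rfl⟩ := Submodule.mem_span_insert.mp hx'
  exact ⟨a, a.2, z, hz, rfl⟩

lemma neg_mem_or_exists_eq_smul_add_of_add_eq {y d c : E} (hy : y ∉ hull 𝕜 (D \ {y}))
    (hd : d ∈ hull 𝕜 D) (hc : c ∈ hull 𝕜 D) (hdc : d + c = y) :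
    -y ∈ hull 𝕜 D ∨ ∃ μ : 𝕜, 0 ≤ μ ∧ ∃ l ∈ (hull 𝕜 D).lineal, c = μ • y + l := by
  have hmono : hull 𝕜 (D \ {y}) ≤ hull 𝕜 D := Submodule.span_mono sdiff_subset
  obtain ⟨a, ha, d₁, hd₁, rfl⟩ := exists_eq_smul_add_of_mem_hull y hd
  obtain ⟨μ, hμ, c₁, hc₁, rfl⟩ := exists_eq_smul_add_of_mem_hull y hc
  have hsum : (1 - (a + μ)) • y = d₁ + c₁ := by
    rw [sub_smul, one_smul, add_smul]
    nth_rw 1 [← hdc]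
    abel
  rcases lt_trichotomy (a + μ) 1 with hlt | heq | hgt
  · have hpos : 0 < 1 - (a + μ) := by linarith
    refine absurd ?_ hy
    convert smul_mem _ (inv_nonneg.mpr hpos.le) (add_mem hd₁ hc₁) using 1
    rw [← hsum, inv_smul_smul₀ hpos.ne']
  · refine Or.inr ⟨μ, hμ, c₁, mem_lineal.mpr ⟨hmono hc₁, ?_⟩, rfl⟩
    rw [heq, sub_self, zero_smul, eq_comm, add_eq_zero_iff_neg_eq'] at hsum
    exact hsum ▸ hmono hd₁
  · refine Or.inl (hmono ?_)
    have hpos : 0 < a + μ - 1 := by linarith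
    rw [← inv_smul_smul₀ hpos.ne' (-y), show (a + μ - 1) • -y = d₁ + c₁ by rw [← hsum]; module]
    exact smul_mem _ (inv_nonneg.mpr hpos.le) (add_mem hd₁ hc₁)

theorem notMem_hull_add_of_notMem_lineal_add {y : E} (hCD : C ≤ hull 𝕜 D)
    (hLC : ((hull 𝕜 D).lineal : Set E) ∩ C = {0}) (hy : y ∉ hull 𝕜 (D \ {y}))
    (hyL : y ∉ ((hull 𝕜 D).lineal : Set E) + ((C : Set E) \ {0})) :
    y ∉ (hull 𝕜 D : Set E) + ((C : Set E) \ {0}) := by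
  intro h
  obtain ⟨d, hd, c, ⟨hcC, hc0⟩, hdc⟩ := Set.mem_add.mp h
  rcases neg_mem_or_exists_eq_smul_add_of_add_eq hy hd (hCD hcC) hdc with hneg | ⟨μ, hμ, l, hl, rfl⟩
  · refine hyL ⟨d, mem_lineal.mpr ⟨hd, ?_⟩, c, ⟨hcC, hc0⟩, hdc⟩
    rw [show -d = c + -y by rw [← hdc]; abel]
    exact add_mem (hCD hcC) hneg
  · rcases hμ.eq_or_lt with rfl | hμ
    · rw [zero_smul, zero_add] at hcC hc0
      exact hc0 (hLC.subset ⟨hl, hcC⟩)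
    · refine hyL (Set.mem_add.mpr ⟨μ⁻¹ • -l, Submodule.smul_mem _ _ (neg_mem hl),
        μ⁻¹ • (μ • y + l), ⟨smul_mem _ (inv_nonneg.mpr hμ.le) hcC, ?_⟩, ?_⟩)
      · exact smul_ne_zero (inv_ne_zero hμ.ne') hc0
      · rw [smul_add, smul_smul, inv_mul_cancel₀ hμ.ne', one_smul, smul_neg]
        abel

lemma lineal_hull_subset_hull_inter :
    ((hull 𝕜 D).lineal : Set E) ⊆ hull 𝕜 (D ∩ (hull 𝕜 D).lineal) := by
  classical
  intro x hx
  obtain ⟨c, hcD, hc0, hcx⟩ := mem_hull_set.mp (mem_lineal.mp hx).1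
  rw [← hcx]
  refine Submodule.sum_mem _ fun m hm => smul_mem _ (hc0 m) (subset_hull ⟨hcD hm, ?_⟩)
  -- `-m` is a nonnegative combination of the other generators and of `-x`
  have hcm : 0 < c m := (hc0 m).lt_of_ne' (Finsupp.mem_support_iff.mp hm)
  have hrest : ∑ m' ∈ c.support.erase m, c m' • m' ∈ hull 𝕜 D :=
    Submodule.sum_mem _ fun m' hm' =>
      smul_mem _ (hc0 m') (subset_hull (hcD (Finset.mem_of_mem_erase hm')))
  refine mem_lineal.mpr ⟨subset_hull (hcD hm), ?_⟩
  have hneg : -m = (c m)⁻¹ • (∑ m' ∈ c.support.erase m, c m' • m' + -x) := by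
    rw [← hcx, Finsupp.sum, ← Finset.add_sum_erase _ _ hm]
    rw [neg_add, ← add_assoc, add_neg_cancel_comm, smul_neg, inv_smul_smul₀ hcm.ne']
  rw [hneg]
  exact smul_mem _ (inv_nonneg.mpr hcm.le) (add_mem hrest (mem_lineal.mp hx).2)

lemma hull_le_hull_sep_sup (hLC : ((hull 𝕜 D).lineal : Set E) ∩ C = {0}) :
    hull 𝕜 D ≤ hull 𝕜 {y ∈ D | y ∉ ((hull 𝕜 D).lineal : Set E) + ((C : Set E) \ {0})} ⊔ C := by
  have hkept : D ∩ (hull 𝕜 D).lineal ⊆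
      {y ∈ D | y ∉ ((hull 𝕜 D).lineal : Set E) + ((C : Set E) \ {0})} := by
    refine fun y ⟨hyD, hyL⟩ => ⟨hyD, ?_⟩
    rintro ⟨l, hl, c, ⟨hcC, hc0⟩, rfl⟩
    refine hc0 (hLC.subset ⟨?_, hcC⟩)
    simpa using Submodule.sub_mem _ hyL hl
  refine Submodule.span_le.mpr fun y hyD => ?_
  by_cases hy : y ∈ ((hull 𝕜 D).lineal : Set E) + ((C : Set E) \ {0})
  · obtain ⟨l, hl, c, hc, rfl⟩ := hy
    exact add_mem
      (Submodule.mem_sup_left (Submodule.span_mono hkept (lineal_hull_subset_hull_inter hl)))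
      (Submodule.mem_sup_right hc.1)
  · exact Submodule.mem_sup_left (subset_hull ⟨hyD, hy⟩)

lemma eq_zero_or_mem_convexHull_sdiff_add {p k y : E} (hp : p ∈ convexHull 𝕜 Q) (hk : k ∈ K)
    (hy : p + k = y) : k = 0 ∨ y ∈ convexHull 𝕜 (Q \ {y}) + (K : Set E) := by
  have hQ : Q ⊆ insert y (Q \ {y}) := (subset_insert y Q).trans insert_sdiff_singleton.superset
  replace hp := convexHull_mono hQ hp
  rcases (Q \ {y}).eq_empty_or_nonempty with hempty | hne
  · rw [hempty, insert_empty_eq, convexHull_singleton, mem_singleton_iff] at hp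
    exact Or.inl (by simpa [hp] using hy)
  rw [convexHull_insert hne, mem_convexJoin] at hp
  obtain ⟨_, hy', p', hp', a, β, ha, hβ, hab, hp⟩ := hp
  rw [mem_singleton_iff.mp hy'] at hp
  rcases hβ.eq_or_lt with rfl | hβ
  · rw [add_zero] at hab
    exact Or.inl (by simpa [← hp, hab] using hy)
  · refine Or.inr ⟨p', hp', β⁻¹ • k, smul_mem _ (inv_nonneg.mpr hβ.le) hk, ?_⟩
    have : β • y = β • (p' + β⁻¹ • k) := by
      rw [smul_add, smul_inv_smul₀ hβ.ne', ← add_left_inj (a • y), ← add_smul, add_comm β,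
        hab, one_smul]
      nth_rw 1 [← hy]
      rw [← hp]
      abel
    exact (smul_right_injective E hβ.ne' this).symm

lemma convexHull_add_subset_of_mem {y : E} (hy : y ∈ convexHull 𝕜 (Q \ {y}) + (K : Set E)) :
    convexHull 𝕜 Q + (K : Set E) ⊆ convexHull 𝕜 (Q \ {y}) + (K : Set E) := by
  have hQ : convexHull 𝕜 Q ⊆ convexHull 𝕜 (Q \ {y}) + (K : Set E) := by
    refine convexHull_min (fun q hq => ?_) ((convex_convexHull 𝕜 _).add K.convex)
    by_cases hqy : q = y
    · exact hqy ▸ hy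
    · exact ⟨q, subset_convexHull 𝕜 _ ⟨hq, hqy⟩, 0, K.zero_mem, add_zero q⟩
  calc convexHull 𝕜 Q + (K : Set E)
      ⊆ convexHull 𝕜 (Q \ {y}) + (K : Set E) + (K : Set E) := add_subset_add_right hQ
    _ = convexHull 𝕜 (Q \ {y}) + (K : Set E) := by
      rw [add_assoc, ← Submodule.coe_sup, sup_idem]

theorem notMem_convexHull_add_add_of_notMem {y : E} (hCK : C ≤ K)
    (hLC : (K.lineal : Set E) ∩ C = {0}) (hy : y ∉ convexHull 𝕜 (Q \ {y}) + (K : Set E)) :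
    y ∉ convexHull 𝕜 Q + (K : Set E) + ((C : Set E) \ {0}) := by
  intro h
  obtain ⟨_, ⟨p, hp, k, hk, rfl⟩, c, ⟨hcC, hc0⟩, rfl⟩ := h
  rcases eq_zero_or_mem_convexHull_sdiff_add hp (add_mem hk (hCK hcC)) (add_assoc p k c).symm
    with hkc | hmem
  · refine hc0 (hLC.subset ⟨mem_lineal.mpr ⟨hCK hcC, ?_⟩, hcC⟩)
    rwa [← eq_neg_of_add_eq_zero_left hkc]
  · exact hy hmem

lemma salient_of_le_of_lineal_inter (hCK : C ≤ K) (hLC : (K.lineal : Set E) ∩ C = {0}) :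
    (C : ConvexCone 𝕜 E).Salient :=
  fun _ hc hc0 hnc => hc0 (hLC.subset ⟨mem_lineal.mpr ⟨hCK hc, hCK hnc⟩, hc⟩)

lemma mem_add_sdiff_zero_of_sub_mem (hC : (C : ConvexCone 𝕜 E).Salient) {U : Set E} {x y : E}
    (hx : x ∈ U + ((C : Set E) \ {0})) (hxy : y - x ∈ C) : y ∈ U + ((C : Set E) \ {0}) := by
  obtain ⟨u, hu, c, ⟨hcC, hc0⟩, rfl⟩ := hx
  refine Set.mem_add.mpr ⟨u, hu, c + (y - (u + c)), ⟨add_mem hcC hxy, fun h => ?_⟩, by abel⟩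
  exact hC c hcC hc0 (by rwa [← eq_neg_of_add_eq_zero_right h])

end Algebra

section Topology

variable {E : Type*} [AddCommGroup E] [Module ℝ E] [TopologicalSpace E] [IsTopologicalAddGroup E]
  [ContinuousSMul ℝ E] [T2Space E]

lemma isClosed_hull_of_linearIndepOn {t : Finset E} (ht : LinearIndepOn ℝ id (t : Set E)) :
    IsClosed (hull ℝ (t : Set E) : Set E) := by
  set f := Fintype.linearCombination ℝ (Subtype.val : ↥(t : Set E) → E)
  have hf : LinearMap.ker f = ⊥ :=
    LinearMap.ker_eq_bot.mpr (linearIndependent_iff_injective_fintypeLinearCombination.mp ht)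
  have himage : (hull ℝ (t : Set E) : Set E) = f '' Ici 0 := by
    ext x
    simp only [SetLike.mem_coe, Submodule.mem_span_finset', mem_image, mem_Ici, f,
      Fintype.linearCombination_apply]
    constructor
    · rintro ⟨w, rfl⟩
      exact ⟨fun i => w i, fun i => (w i).2, rfl⟩
    · rintro ⟨w, hw, rfl⟩
      exact ⟨fun i => ⟨w i, hw i⟩, rfl⟩
  rw [himage]
  exact (LinearMap.isClosedEmbedding_of_injective hf).isClosedMap _ isClosed_Ici

lemma isClosed_hull_of_finite {s : Set E} (hs : s.Finite) : IsClosed (hull ℝ s : Set E) := by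
  classical
  lift s to Finset E using hs
  have : (hull ℝ (s : Set E) : Set E) =
      ⋃ (u : Finset E) (_ : u ∈ (Finset.powerset s).filter fun u : Finset E =>
        LinearIndepOn ℝ id (u : Set E)), (hull ℝ (u : Set E) : Set E) := by
    ext x
    simp only [SetLike.mem_coe, mem_iUnion, Finset.mem_filter, Finset.mem_powerset, exists_prop]
    constructor
    · intro hx
      obtain ⟨u, hu, hli, hxu⟩ := exists_linearIndepOn_of_mem_hull s hx
      exact ⟨u, ⟨hu, hli⟩, hxu⟩
    · rintro ⟨u, ⟨hu, -⟩, hxu⟩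
      exact Submodule.span_mono (Finset.coe_subset.mpr hu) hxu
  rw [this]
  exact isClosed_biUnion_finset fun u hu =>
    isClosed_hull_of_linearIndepOn (Finset.mem_filter.mp hu).2

end Topology

end PointedCone

open PointedCone

section RecessionCone

variable {q : ℕ}

lemma coneOf_eq_hull (B : Set (Fin q → ℝ)) : coneOf B = hull ℝ B := by
  ext x
  constructor
  · rintro (rfl | ⟨l, hl, b, hb, rfl⟩)
    · exact zero_mem _
    · exact smul_mem _ hl (convexHull_min subset_hull (hull ℝ B).convex hb)
  · intro hx
    obtain ⟨c, hcB, hc0, rfl⟩ := mem_hull_set.mp hx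
    rcases (c.support.sum_nonneg fun i _ => hc0 i).eq_or_lt with hzero | hpos
    · refine Or.inl (Finset.sum_eq_zero fun i hi => ?_)
      rw [(Finset.sum_eq_zero_iff_of_nonneg fun i _ => hc0 i).mp hzero.symm i hi]
      exact zero_smul ℝ i
    · refine Or.inr ⟨_, hpos.le, c.support.centerMass c id,
        c.support.centerMass_mem_convexHull (fun i _ => hc0 i) hpos fun i hi => hcB hi, ?_⟩
      rw [Finset.centerMass, smul_inv_smul₀ hpos.ne']
      rfl

lemma coe_subset_recCone_add (U : Set (Fin q → ℝ)) (K : PointedCone ℝ (Fin q → ℝ)) :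
    (K : Set (Fin q → ℝ)) ⊆ recCone (U + K) := by
  rintro k hk _ ⟨u, hu, k', hk', rfl⟩
  exact ⟨u, hu, k' + k, add_mem hk' hk, (add_assoc u k' k).symm⟩

lemma add_recCone_subset (U : Set (Fin q → ℝ)) : U + recCone U ⊆ U := by
  rintro _ ⟨u, hu, d, hd, rfl⟩
  exact hd u hu

open Filter Topology in
theorem recCone_convexHull_add {Q : Set (Fin q → ℝ)} (hQ : Q.Finite) (hQne : Q.Nonempty)
    {K : PointedCone ℝ (Fin q → ℝ)} (hK : IsClosed (K : Set (Fin q → ℝ))) :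
    recCone (convexHull ℝ Q + (K : Set (Fin q → ℝ))) = K := by
  refine Subset.antisymm (fun d hd => ?_) (coe_subset_recCone_add _ K)
  obtain ⟨y₀, hy₀⟩ := hQne
  have hray : ∀ n : ℕ, y₀ + (n : ℝ) • d ∈ convexHull ℝ Q + (K : Set (Fin q → ℝ)) := by
    intro n
    induction n with
    | zero => simpa using Set.add_mem_add (subset_convexHull ℝ Q hy₀) K.zero_mem
    | succ n ih => simpa [add_smul, add_assoc] using hd _ ih
  choose p hp k hk hpk using fun n => Set.mem_add.mp (hray n)
  obtain ⟨M, hM⟩ := (hQ.isCompact_convexHull (𝕜 := ℝ)).isBounded.exists_norm_le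
  -- `k n / n = d + (y₀ - p n) / n`, and `p n` stays in the bounded set `convexHull ℝ Q`
  have hlim : Tendsto (fun n : ℕ => (n : ℝ)⁻¹ • k n) atTop (𝓝 d) := by
    have hbdd : IsBoundedUnder (· ≤ ·) atTop (norm ∘ fun n => y₀ - p n) :=
      isBoundedUnder_of ⟨‖y₀‖ + M, fun n => (norm_sub_le _ _).trans (by linarith [hM _ (hp n)])⟩
    have hshift : Tendsto (fun n : ℕ => d + (n : ℝ)⁻¹ • (y₀ - p n)) atTop (𝓝 d) := by
      simpa using (tendsto_inv_atTop_nhds_zero_nat.zero_smul_isBoundedUnder_le hbdd).const_add d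
    refine hshift.congr' ?_
    filter_upwards [eventually_ne_atTop 0] with n hn
    rw [show k n = (n : ℝ) • d + (y₀ - p n) by rw [eq_sub_of_add_eq' (hpk n)]; abel, smul_add,
      inv_smul_smul₀ (Nat.cast_ne_zero.mpr hn)]
  exact hK.mem_of_tendsto hlim (Eventually.of_forall fun n => smul_mem _ (by positivity) (hk n))

end RecessionCone

section Solutions

variable {m n q r : ℕ} {A : Matrix (Fin m) (Fin n) ℝ} {b : Fin m → ℝ}
  {P : Matrix (Fin q) (Fin n) ℝ} {Z : Matrix (Fin q) (Fin r) ℝ} {UI : Set (Fin q → ℝ)}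
  {Xpoi Xdir : Set ((Fin n → ℝ) × (Fin q → ℝ))}

def keptDirections (Xdir : Set ((Fin n → ℝ) × (Fin q → ℝ))) (L C : Set (Fin q → ℝ)) :
    Set (Fin n → ℝ) :=
  {x | ∃ y, (x, y) ∈ Xdir ∧ y ∉ L + (C \ {0})}

lemma image_snd_sdiff_singleton_subset {α β : Type*} (X : Set (α × β)) (s : α × β) :
    Prod.snd '' X \ {s.2} ⊆ Prod.snd '' (X \ {s}) := by
  rintro _ ⟨⟨t, ht, rfl⟩, hts⟩
  exact ⟨t, ⟨ht, fun h => hts (h ▸ rfl)⟩, rfl⟩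

lemma sub_mem_of_mulVec_le {C : Set (Fin q → ℝ)}
    (hC : C = {y | ∀ j, 0 ≤ Z.transpose.mulVec y j}) {u v : Fin q → ℝ}
    (h : ∀ j, Z.transpose.mulVec u j ≤ Z.transpose.mulVec v j) : v - u ∈ C := by
  rw [hC]
  intro j
  simpa [Matrix.mulVec_sub, sub_nonneg] using h j

lemma convex_setOf_le_mulVec : Convex ℝ {x | ∀ i, b i ≤ A.mulVec x i} :=
  (convex_Ici b).linear_preimage A.mulVecLin

lemma mulVec_mem_recCone {C : PointedCone ℝ (Fin q → ℝ)}
    (hUI : UI = P.mulVec '' {x | ∀ i, b i ≤ A.mulVec x i} + C) {x : Fin n → ℝ}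
    (hx : ∀ i, 0 ≤ A.mulVec x i) : P.mulVec x ∈ recCone UI := by
  subst hUI
  rintro _ ⟨_, ⟨w, hw, rfl⟩, c, hc, rfl⟩
  refine ⟨P.mulVec (w + x), ⟨w + x, fun i => ?_, rfl⟩, c, hc, ?_⟩
  · simpa [Matrix.mulVec_add] using add_le_add (hw i) (hx i)
  · simp only [Matrix.mulVec_add]
    abel

lemma IsPPSolution.recCone_eq (h : IsPPSolution A b P Z UI Xpoi Xdir) :
    recCone UI = hull ℝ (Prod.snd '' Xdir) := by
  obtain ⟨hpoi, hdir, hne, -, -, rfl⟩ := h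
  rw [coneOf_eq_hull]
  exact recCone_convexHull_add (hpoi.image _) (hne.image _) (isClosed_hull_of_finite (hdir.image _))

lemma IsPPSolution.le_hull {U : Set (Fin q → ℝ)} {C : PointedCone ℝ (Fin q → ℝ)}
    (h : IsPPSolution A b P Z UI Xpoi Xdir) (hUI : UI = U + C) :
    C ≤ hull ℝ (Prod.snd '' Xdir) := fun c hc => by
  rw [← SetLike.mem_coe, ← h.recCone_eq, hUI]
  exact coe_subset_recCone_add U C hc

lemma IsIrredundantPPSolution.eq_of_subset (h : IsIrredundantPPSolution A b P Z UI Xpoi Xdir)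
    {Vpoi Vdir : Set ((Fin n → ℝ) × (Fin q → ℝ))} (hpoi : Vpoi ⊆ Xpoi) (hdir : Vdir ⊆ Xdir)
    (hne : Vpoi.Nonempty)
    (hUI : UI = convexHull ℝ (Prod.snd '' Vpoi) + coneOf (Prod.snd '' Vdir)) :
    Vpoi = Xpoi ∧ Vdir = Xdir := by
  obtain ⟨⟨hpoiFin, hdirFin, -, hpoiFeas, hdirFeas, -⟩, hmin⟩ := h
  exact hmin Vpoi Vdir hpoi hdir ⟨hpoiFin.subset hpoi, hdirFin.subset hdir, hne,
    fun s hs => hpoiFeas s (hpoi hs), fun s hs => hdirFeas s (hdir hs), hUI⟩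

lemma IsIrredundantPPSolution.notMem_hull_sdiff
    (h : IsIrredundantPPSolution A b P Z UI Xpoi Xdir) {s : (Fin n → ℝ) × (Fin q → ℝ)}
    (hs : s ∈ Xdir) : s.2 ∉ hull ℝ (Prod.snd '' Xdir \ {s.2}) := by
  intro hy
  have hcone : hull ℝ (Prod.snd '' (Xdir \ {s})) = hull ℝ (Prod.snd '' Xdir) := by
    refine le_antisymm (Submodule.span_mono (image_mono sdiff_subset)) ?_
    calc hull ℝ (Prod.snd '' Xdir)
        ≤ hull ℝ (insert s.2 (Prod.snd '' Xdir \ {s.2})) :=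
          Submodule.span_mono ((subset_insert _ _).trans insert_sdiff_singleton.superset)
      _ = hull ℝ (Prod.snd '' Xdir \ {s.2}) := Submodule.span_insert_eq_span hy
      _ ≤ hull ℝ (Prod.snd '' (Xdir \ {s})) :=
          Submodule.span_mono (image_snd_sdiff_singleton_subset _ _)
  obtain ⟨-, -, hne, -, -, hUI⟩ := h.1
  have heq := (h.eq_of_subset subset_rfl sdiff_subset hne
    (by rw [hUI, coneOf_eq_hull, coneOf_eq_hull, hcone])).2
  have hmem : s ∈ Xdir \ {s} := by rw [heq]; exact hs
  exact hmem.2 rfl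

lemma IsIrredundantPPSolution.notMem_convexHull_sdiff_add
    (h : IsIrredundantPPSolution A b P Z UI Xpoi Xdir) {s : (Fin n → ℝ) × (Fin q → ℝ)}
    (hs : s ∈ Xpoi) : s.2 ∉ convexHull ℝ (Prod.snd '' Xpoi \ {s.2}) +
      (hull ℝ (Prod.snd '' Xdir) : Set (Fin q → ℝ)) := by
  intro hy
  have hsub := image_snd_sdiff_singleton_subset Xpoi s
  have hne : (Xpoi \ {s}).Nonempty := by
    obtain ⟨_, hp, -⟩ := hy
    exact ((convexHull_nonempty_iff.mp ⟨_, hp⟩).mono hsub).of_image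
  obtain ⟨-, -, -, -, -, hUI⟩ := h.1
  rw [coneOf_eq_hull] at hUI
  have heq := (h.eq_of_subset sdiff_subset subset_rfl hne (by
    rw [coneOf_eq_hull]
    refine hUI.trans (Subset.antisymm ?_ ?_)
    · exact (convexHull_add_subset_of_mem hy).trans (add_subset_add_right (convexHull_mono hsub))
    · exact add_subset_add_right (convexHull_mono (image_mono sdiff_subset)))).1
  have hmem : s ∈ Xpoi \ {s} := by rw [heq]; exact hs
  exact hmem.2 rfl

theorem IsIrredundantPPSolution.notMem_recCone_add {U : Set (Fin q → ℝ)}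
    {C : PointedCone ℝ (Fin q → ℝ)} (h : IsIrredundantPPSolution A b P Z UI Xpoi Xdir)
    (hUI : UI = U + C) (hLC : ((hull ℝ (Prod.snd '' Xdir)).lineal : Set (Fin q → ℝ)) ∩ C = {0})
    {s : (Fin n → ℝ) × (Fin q → ℝ)} (hs : s ∈ Xdir)
    (hsL : s.2 ∉ ((hull ℝ (Prod.snd '' Xdir)).lineal : Set (Fin q → ℝ)) + ((C : Set _) \ {0})) :
    s.2 ∉ recCone UI + ((C : Set (Fin q → ℝ)) \ {0}) := by
  rw [h.1.recCone_eq]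
  exact notMem_hull_add_of_notMem_lineal_add (h.1.le_hull hUI) hLC (h.notMem_hull_sdiff hs) hsL

lemma IsPPSolution.convexHull_add_coneOf_add_subset {C : PointedCone ℝ (Fin q → ℝ)}
    (h : IsPPSolution A b P Z UI Xpoi Xdir)
    (hUI : UI = P.mulVec '' {x | ∀ i, b i ≤ A.mulVec x i} + C) (L : Set (Fin q → ℝ)) :
    convexHull ℝ (P.mulVec '' (Prod.fst '' Xpoi)) +
      coneOf (P.mulVec '' keptDirections Xdir L C) + C ⊆ UI := by
  have hrec := h.recCone_eq
  obtain ⟨-, -, -, hpoiFeas, hdirFeas, -⟩ := h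
  have hpoi : convexHull ℝ (P.mulVec '' (Prod.fst '' Xpoi)) ⊆
      P.mulVec '' {x | ∀ i, b i ≤ A.mulVec x i} := by
    refine convexHull_min ?_ (convex_setOf_le_mulVec.linear_image P.mulVecLin)
    rintro _ ⟨_, ⟨s, hs, rfl⟩, rfl⟩
    exact ⟨s.1, (hpoiFeas s hs).1, rfl⟩
  have hdir : coneOf (P.mulVec '' keptDirections Xdir L C) ⊆ recCone UI := by
    rw [coneOf_eq_hull, hrec]
    refine Submodule.span_le.mpr ?_
    rintro _ ⟨x, ⟨y, hxy, -⟩, rfl⟩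
    exact hrec ▸ mulVec_mem_recCone hUI (hdirFeas _ hxy).2.1
  calc _ ⊆ P.mulVec '' {x | ∀ i, b i ≤ A.mulVec x i} + recCone UI + C :=
        add_subset_add_right (add_subset_add hpoi hdir)
    _ = UI + recCone UI := by rw [add_right_comm, hUI]
    _ ⊆ UI := add_recCone_subset UI

lemma IsPPSolution.subset_convexHull_add_coneOf_add {C : PointedCone ℝ (Fin q → ℝ)}
    (h : IsPPSolution A b P Z UI Xpoi Xdir)
    (hC : (C : Set (Fin q → ℝ)) = {y | ∀ j, 0 ≤ Z.transpose.mulVec y j})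
    (hLC : ((hull ℝ (Prod.snd '' Xdir)).lineal : Set (Fin q → ℝ)) ∩ C = {0}) :
    UI ⊆ convexHull ℝ (P.mulVec '' (Prod.fst '' Xpoi)) +
      coneOf (P.mulVec '' keptDirections Xdir (hull ℝ (Prod.snd '' Xdir)).lineal C) + C := by
  obtain ⟨-, -, -, hpoiFeas, hdirFeas, hUI⟩ := h
  have hpoi : convexHull ℝ (Prod.snd '' Xpoi) ⊆
      convexHull ℝ (P.mulVec '' (Prod.fst '' Xpoi)) + C := by
    refine convexHull_min ?_ ((convex_convexHull ℝ _).add C.convex)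
    rintro _ ⟨s, hs, rfl⟩
    exact ⟨P.mulVec s.1, subset_convexHull ℝ _ ⟨s.1, ⟨s, hs, rfl⟩, rfl⟩, s.2 - P.mulVec s.1,
      sub_mem_of_mulVec_le hC (hpoiFeas s hs).2, add_sub_cancel _ _⟩
  have hdir : hull ℝ (Prod.snd '' Xdir) ≤
      hull ℝ (P.mulVec '' keptDirections Xdir (hull ℝ (Prod.snd '' Xdir)).lineal C) ⊔ C := by
    refine (hull_le_hull_sep_sup hLC).trans (sup_le (Submodule.span_le.mpr ?_) le_sup_right)
    rintro _ ⟨⟨s, hs, rfl⟩, hsL⟩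
    rw [SetLike.mem_coe, ← add_sub_cancel (P.mulVec s.1) s.2]
    exact add_mem (Submodule.mem_sup_left (subset_hull ⟨s.1, ⟨s.2, hs, hsL⟩, rfl⟩))
      (Submodule.mem_sup_right (sub_mem_of_mulVec_le hC (hdirFeas s hs).2.2))
  rw [hUI, coneOf_eq_hull, coneOf_eq_hull]
  calc _ ⊆ convexHull ℝ (P.mulVec '' (Prod.fst '' Xpoi)) + C + (_ + C) :=
        add_subset_add hpoi (by rw [← Submodule.coe_sup]; exact hdir)
    _ = _ := by rw [add_add_add_comm, ← Submodule.coe_sup C C, sup_idem]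

theorem IsIrredundantPPSolution.isVLPSolution {C : PointedCone ℝ (Fin q → ℝ)}
    (h : IsIrredundantPPSolution A b P Z UI Xpoi Xdir)
    (hC : (C : Set (Fin q → ℝ)) = {y | ∀ j, 0 ≤ Z.transpose.mulVec y j})
    (hUI : UI = P.mulVec '' {x | ∀ i, b i ≤ A.mulVec x i} + C)
    (hLC : ((hull ℝ (Prod.snd '' Xdir)).lineal : Set (Fin q → ℝ)) ∩ C = {0}) :
    IsVLPSolution A b P C (Prod.fst '' Xpoi)
      (keptDirections Xdir (hull ℝ (Prod.snd '' Xdir)).lineal C) := by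
  have hCD := h.1.le_hull hUI
  have hsal := salient_of_le_of_lineal_inter hCD hLC
  obtain ⟨hpoiFin, hdirFin, hpoiNe, hpoiFeas, hdirFeas, hUIeq⟩ := h.1
  refine ⟨hpoiFin.image _, (hdirFin.image Prod.fst).subset ?_, hpoiNe.image _, ?_, ?_, ?_, ?_, ?_⟩
  · rintro x ⟨y, hxy, -⟩
    exact ⟨_, hxy, rfl⟩
  · rintro _ ⟨s, hs, rfl⟩
    exact (hpoiFeas s hs).1
  · rintro x ⟨y, hxy, hyL⟩
    refine ⟨?_, (hdirFeas _ hxy).2.1⟩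
    rintro rfl
    have hyC : y ∈ C := by simpa using sub_mem_of_mulVec_le hC (hdirFeas _ hxy).2.2
    exact hyL ⟨0, zero_mem _, y, ⟨hyC, fun hy0 => (hdirFeas _ hxy).1 (Prod.ext rfl hy0)⟩,
      zero_add y⟩
  · rintro _ ⟨s, hs, rfl⟩ hmem
    have hy := mem_add_sdiff_zero_of_sub_mem hsal hmem (sub_mem_of_mulVec_le hC (hpoiFeas s hs).2)
    refine notMem_convexHull_add_add_of_notMem hCD hLC (h.notMem_convexHull_sdiff_add hs) ?_
    rw [← coneOf_eq_hull, ← hUIeq, hUI]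
    exact add_subset_add_right (subset_add_left _ C.zero_mem) hy
  · rintro x ⟨y, hxy, hyL⟩ hmem
    have hy := mem_add_sdiff_zero_of_sub_mem hsal hmem
      (sub_mem_of_mulVec_le hC (hdirFeas _ hxy).2.2)
    have hrec : P.mulVec '' {z | ∀ i, 0 ≤ A.mulVec z i} ⊆ recCone UI := by
      rintro _ ⟨z, hz, rfl⟩
      exact mulVec_mem_recCone hUI hz
    exact h.notMem_recCone_add hUI hLC hxy hyL (add_subset_add_right hrec hy)
  · rw [← hUI]
    exact Subset.antisymm (h.1.convexHull_add_coneOf_add_subset hUI _)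
      (h.1.subset_convexHull_add_coneOf_add hC hLC)

end Solutions

theorem irredundant_solution_yields_vlp_solution_general
    (m n q r : ℕ) (A : Matrix (Fin m) (Fin n) ℝ) (b : Fin m → ℝ)
    (P : Matrix (Fin q) (Fin n) ℝ) (Z : Matrix (Fin q) (Fin r) ℝ)
    (C : Set (Fin q → ℝ)) (hC : C = {y | ∀ j, 0 ≤ Z.transpose.mulVec y j})
    (S : Set (Fin n → ℝ)) (hS : S = {x | ∀ i, b i ≤ A.mulVec x i})
    (UI : Set (Fin q → ℝ)) (hUI : UI = (P.mulVec '' S) + C)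
    (L : Set (Fin q → ℝ)) (hL : L = recCone UI ∩ (-recCone UI))
    (hLC : L ∩ C = {0})
    (Xpoi Xdir : Set ((Fin n → ℝ) × (Fin q → ℝ)))
    (hirr : IsIrredundantPPSolution A b P Z UI Xpoi Xdir) :
    (∀ s ∈ Xdir, s.2 ∉ L + (C \ {0}) → s.2 ∉ recCone UI + (C \ {0})) ∧
    IsVLPSolution A b P C (Prod.fst '' Xpoi)
      {x | ∃ y, (x, y) ∈ Xdir ∧ y ∉ L + (C \ {0})} := by
  obtain ⟨C, rfl⟩ : ∃ K : PointedCone ℝ (Fin q → ℝ), C = K :=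
    ⟨(positive ℝ (Fin r → ℝ)).comap (Matrix.toLin' Z.transpose), by ext y; simp [hC, Pi.le_def]⟩
  replace hL : L = (hull ℝ (Prod.snd '' Xdir)).lineal := by
    rw [hL, hirr.1.recCone_eq]
    ext
    simp
  subst hL hS
  exact ⟨fun s hs => hirr.notMem_recCone_add hUI hLC hs, hirr.isVLPSolution hC hUI hLC⟩

theorem irredundant_solution_yields_vlp_solution
    (m n q r : ℕ) (A : Matrix (Fin m) (Fin n) ℝ) (b : Fin m → ℝ)
    (P : Matrix (Fin q) (Fin n) ℝ) (Z : Matrix (Fin q) (Fin r) ℝ)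
    (hker : ∀ y : Fin q → ℝ, Z.transpose.mulVec y = 0 → y = 0)
    (C : Set (Fin q → ℝ)) (hC : C = {y | ∀ j, 0 ≤ Z.transpose.mulVec y j})
    (S : Set (Fin n → ℝ)) (hS : S = {x | ∀ i, b i ≤ A.mulVec x i})
    (hSne : S.Nonempty)
    (UI : Set (Fin q → ℝ)) (hUI : UI = (P.mulVec '' S) + C)
    (L : Set (Fin q → ℝ)) (hL : L = recCone UI ∩ (-recCone UI))
    (hLC : L ∩ C = {0})
    (Xpoi Xdir : Set ((Fin n → ℝ) × (Fin q → ℝ)))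
    (hirr : IsIrredundantPPSolution A b P Z UI Xpoi Xdir) :
    (∀ s ∈ Xdir, s.2 ∉ L + (C \ {0}) → s.2 ∉ recCone UI + (C \ {0})) ∧
    IsVLPSolution A b P C (Prod.fst '' Xpoi)
      {x | ∃ y, (x, y) ∈ Xdir ∧ y ∉ L + (C \ {0})} :=
  irredundant_solution_yields_vlp_solution_general m n q r A b P Z C hC S hS UI hUI L hL hLC Xpoi
    Xdir hirr
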